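/- arXiv:1505.04514 — 6 statements merged into one kernel-verified Lean document; each statement's English description precedes it below -/
import Mathlib

section
/- Let G be a simple graph with maximum degree at most Δ, let v be a vertex, let r be a natural number, and suppose that every independent set of G consisting of vertices at graph distance at most r from v has at most f elements (f a natural number). Then the number of vertices at graph distance at most r from v is at most (Δ + 1) · f. -/
/-- If every independent set of `G` inside the ball of radius `r` around `v` has at most `f`
elements, and the maximum degree of `G` is at most `Δ`, then the ball of radius `r` around `v`
has at most `(Δ + 1) * f` vertices. -/
theorem stmt_0 {V : Type*} [Fintype V] [DecidableEq V] (G : SimpleGraph V)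
    [DecidableRel G.Adj] (Δ f : ℕ) (hΔ : ∀ u : V, G.degree u ≤ Δ)
    (v : V) (r : ℕ)
    (hf : ∀ s : Finset V, (∀ u ∈ s, G.dist v u ≤ r) →
      (∀ u ∈ s, ∀ w ∈ s, u ≠ w → ¬ G.Adj u w) → s.card ≤ f) :
    (Finset.univ.filter fun u : V => G.dist v u ≤ r).card ≤ (Δ + 1) * f := by
  classical
  set B := Finset.univ.filter fun u : V => G.dist v u ≤ r with hB
  set P := B.powerset.filter (fun s => ∀ u ∈ s, ∀ w ∈ s, u ≠ w → ¬ G.Adj u w) with hP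
  have hex : ∃ S ∈ P, ∀ T ∈ P, T.card ≤ S.card := by
    apply Finset.exists_max_image
    exact ⟨∅, by simp [hP]⟩
  obtain ⟨S, hSP, hmax⟩ := hex
  have hSB : S ⊆ B := Finset.mem_powerset.mp (Finset.mem_filter.mp hSP).1
  have hSind : ∀ u ∈ S, ∀ w ∈ S, u ≠ w → ¬ G.Adj u w := (Finset.mem_filter.mp hSP).2
  -- domination
  have hdom : ∀ u ∈ B, ∃ s ∈ S, u = s ∨ G.Adj s u := by
    intro u hu
    by_contra hcon
    push_neg at hcon
    have huS : u ∉ S := fun h => (hcon u h).1 rfl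
    have hins : insert u S ∈ P := by
      refine Finset.mem_filter.mpr ⟨Finset.mem_powerset.mpr ?_, ?_⟩
      · exact Finset.insert_subset hu hSB
      · intro a ha b hb hab
        rcases Finset.mem_insert.mp ha with rfl | ha'
        · rcases Finset.mem_insert.mp hb with rfl | hb'
          · exact absurd rfl hab
          · intro hadj
            exact (hcon b hb').2 hadj.symm
        · rcases Finset.mem_insert.mp hb with rfl | hb'
          · intro hadj
            exact (hcon a ha').2 hadj
          · exact hSind a ha' b hb' hab
    have := hmax _ hins
    rw [Finset.card_insert_of_notMem huS] at this
    omega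
  have hcover : B ⊆ S.biUnion (fun s => insert s (G.neighborFinset s)) := by
    intro u hu
    obtain ⟨s, hs, h⟩ := hdom u hu
    refine Finset.mem_biUnion.mpr ⟨s, hs, ?_⟩
    rcases h with rfl | hadj
    · exact Finset.mem_insert_self _ _
    · exact Finset.mem_insert_of_mem (by simpa using hadj)
  have hSf : S.card ≤ f := by
    apply hf
    · intro u hu
      have := hSB hu
      simpa [hB] using this
    · exact hSind
  calc B.card ≤ (S.biUnion (fun s => insert s (G.neighborFinset s))).card :=
        Finset.card_le_card hcover
    _ ≤ ∑ s ∈ S, (insert s (G.neighborFinset s)).card := Finset.card_biUnion_le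
    _ ≤ ∑ s ∈ S, (Δ + 1) := by
        apply Finset.sum_le_sum
        intro s hs
        have h1 : (insert s (G.neighborFinset s)).card ≤ (G.neighborFinset s).card + 1 :=
          Finset.card_insert_le _ _
        have h2 : (G.neighborFinset s).card = G.degree s := G.card_neighborFinset_eq_degree s
        have := hΔ s
        omega
    _ = S.card * (Δ + 1) := by rw [Finset.sum_const, smul_eq_mul]
    _ ≤ f * (Δ + 1) := Nat.mul_le_mul_right _ hSf
    _ = (Δ + 1) * f := Nat.mul_comm _ _
end

section
/- Let Δ ≥ 1 be a natural number, α > 0, N ≥ 0, and β ≥ (101/100)^(α/2). Place points v_i = (i, 0) and u_i = (i, 10Δ) in the Euclidean plane for i ∈ {1, …, Δ}, and let each v_i be assigned an arbitrary power P_i > 0. Then for every sending set S ⊆ {v_1, …, v_Δ}, there is at most one index i such that v_i ∈ S and SINR_{u_i}(v_i) ≥ β. -/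
open scoped BigOperators
open scoped Classical

/-- The point `(x, y)` in the Euclidean plane. -/
noncomputable def pt (x y : ℝ) : EuclideanSpace ℝ (Fin 2) :=
  (WithLp.equiv 2 (Fin 2 → ℝ)).symm ![x, y]

/-- The SINR of sender `v` at receiver `u`, given a set `S` of simultaneously transmitting
sender positions in the Euclidean plane, powers `P`, path-loss exponent `α` and noise `N`. -/
noncomputable def sinr (α N : ℝ) (S : Finset (EuclideanSpace ℝ (Fin 2)))
    (P : EuclideanSpace ℝ (Fin 2) → ℝ) (u v : EuclideanSpace ℝ (Fin 2)) : ℝ :=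
  (P v * dist v u ^ (-α)) /
    ((∑ w ∈ S.filter fun w => w ≠ u ∧ w ≠ v, P w * dist w u ^ (-α)) + N)

lemma dist_pt (a b c d : ℝ) : dist (pt a b) (pt c d) = Real.sqrt ((a-c)^2+(b-d)^2) := by
  rw [EuclideanSpace.dist_eq]
  congr 1
  simp [pt, Fin.sum_univ_two, Real.dist_eq, sq_abs]

lemma pt_inj {a b c d : ℝ} (h : pt a b = pt c d) : a = c ∧ b = d := by
  have := (WithLp.equiv 2 (Fin 2 → ℝ)).symm.injective h
  exact ⟨congrFun this 0, congrFun this 1⟩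

lemma sq_rpow (T : ℝ) (hT : 0 ≤ T) (α : ℝ) : (T^2) ^ (-(α/2)) = T ^ (-α) := by
  rw [← Real.rpow_natCast T 2, ← Real.rpow_mul hT]
  congr 1; push_cast; ring

lemma gap (T D α β : ℝ) (hα : 0 < α) (hT : 0 < T) (hD2 : (100/101) * D^2 < T^2)
    (hDpos : 0 < D) (hβ : ((101:ℝ)/100) ^ (α/2) ≤ β) : T ^ (-α) < β * D ^ (-α) := by
  have h1 : T ^ (-α) < ((100/101) * D^2) ^ (-(α/2)) := by
    rw [← sq_rpow T hT.le]
    exact Real.rpow_lt_rpow_of_neg (by positivity) hD2 (by linarith)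
  have h2 : (((100:ℝ)/101) * D^2) ^ (-(α/2)) = ((101:ℝ)/100) ^ (α/2) * D ^ (-α) := by
    rw [Real.mul_rpow (by norm_num) (by positivity), sq_rpow D hDpos.le,
      Real.rpow_neg (by norm_num), ← Real.inv_rpow (by norm_num)]
    norm_num
  have h3 : ((101:ℝ)/100) ^ (α/2) * D ^ (-α) ≤ β * D ^ (-α) :=
    mul_le_mul_of_nonneg_right hβ (Real.rpow_nonneg hDpos.le _)
  linarith [h2 ▸ h1]

/-- Extracting the single cross-interference term from a successful link. -/
lemma key (Δ : ℕ) (α β N : ℝ) (hN : 0 ≤ N)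
    (hβ : ((101 : ℝ) / 100) ^ (α / 2) ≤ β)
    (P : EuclideanSpace ℝ (Fin 2) → ℝ)
    (hP : ∀ i ∈ Finset.Icc 1 Δ, 0 < P (pt i 0))
    (S : Finset (EuclideanSpace ℝ (Fin 2)))
    (hS : S ⊆ (Finset.Icc 1 Δ).image fun i : ℕ => pt i 0)
    (i : ℕ) (j : ℕ) (hj : j ∈ Finset.Icc 1 Δ) (hΔ : 1 ≤ Δ)
    (hne : i ≠ j) (hjS : pt j 0 ∈ S)
    (hsi : β ≤ sinr α N S P (pt i (10 * Δ)) (pt i 0)) :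
    β * (P (pt j 0) * Real.sqrt (((j:ℝ)-i)^2 + (10*Δ)^2) ^ (-α))
      ≤ P (pt i 0) * (10*(Δ:ℝ)) ^ (-α) := by
  have hT : (0:ℝ) < 10 * Δ := by positivity
  have hd1 : dist (pt i 0) (pt i (10*Δ)) = 10*(Δ:ℝ) := by
    rw [dist_pt]; rw [show ((i:ℝ)-i)^2 + ((0:ℝ)-10*Δ)^2 = (10*(Δ:ℝ))^2 by ring]
    exact Real.sqrt_sq hT.le
  have hnonneg : ∀ w ∈ S.filter fun w => w ≠ pt i (10*Δ) ∧ w ≠ pt i 0,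
      0 ≤ P w * dist w (pt i (10*Δ)) ^ (-α) := by
    intro w hw
    have hwS : w ∈ S := (Finset.mem_filter.mp hw).1
    obtain ⟨k, hk, rfl⟩ := Finset.mem_image.mp (hS hwS)
    exact mul_nonneg (hP k hk).le (Real.rpow_nonneg dist_nonneg _)
  have hmem : pt j 0 ∈ S.filter fun w => w ≠ pt i (10*Δ) ∧ w ≠ pt i 0 := by
    refine Finset.mem_filter.mpr ⟨hjS, ?_, ?_⟩
    · intro h; exact absurd (pt_inj h).2 (by nlinarith)
    · intro h; exact hne (Nat.cast_injective (pt_inj h).1).symm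
  have hsingle := Finset.single_le_sum hnonneg hmem
  have hd2 : dist (pt j 0) (pt i (10*Δ)) = Real.sqrt (((j:ℝ)-i)^2 + (10*Δ)^2) := by
    rw [dist_pt]; ring_nf
  rw [hd2] at hsingle
  set I := ∑ w ∈ S.filter fun w => w ≠ pt i (10*Δ) ∧ w ≠ pt i 0,
      P w * dist w (pt i (10*Δ)) ^ (-α) with hI
  have hIpos : 0 < I + N := by
    have : 0 < P (pt j 0) * Real.sqrt (((j:ℝ)-i)^2 + (10*Δ)^2) ^ (-α) := by
      have hDpos : 0 < Real.sqrt (((j:ℝ)-i)^2 + (10*Δ)^2) :=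
        Real.sqrt_pos.mpr (by positivity)
      exact mul_pos (hP j hj) (Real.rpow_pos_of_pos hDpos _)
    linarith
  have h := hsi
  rw [sinr, hd1] at h
  rw [le_div_iff₀ hIpos] at h
  have hβpos : 0 < β := lt_of_lt_of_le (by positivity) hβ
  calc β * (P (pt j 0) * Real.sqrt (((j:ℝ)-i)^2 + (10*Δ)^2) ^ (-α))
      ≤ β * (I + N) := by
        apply mul_le_mul_of_nonneg_left _ hβpos.le
        linarith
    _ ≤ P (pt i 0) * (10*(Δ:ℝ)) ^ (-α) := h

/-- In the two-parallel-lines construction with senders `vᵢ = (i, 0)` and receivers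
`uᵢ = (i, 10Δ)` for `i ∈ {1, …, Δ}`, with `β ≥ (101/100)^(α/2)` and arbitrary positive
powers, in any single slot at most one receiver `uᵢ` successfully receives from its
partner `vᵢ`. -/
theorem stmt_4 (Δ : ℕ) (hΔ : 1 ≤ Δ) (α β N : ℝ) (hα : 0 < α) (hN : 0 ≤ N)
    (hβ : ((101 : ℝ) / 100) ^ (α / 2) ≤ β)
    (P : EuclideanSpace ℝ (Fin 2) → ℝ)
    (hP : ∀ i ∈ Finset.Icc 1 Δ, 0 < P (pt i 0))
    (S : Finset (EuclideanSpace ℝ (Fin 2)))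
    (hS : S ⊆ (Finset.Icc 1 Δ).image fun i : ℕ => pt i 0) :
    ∀ i ∈ Finset.Icc 1 Δ, ∀ j ∈ Finset.Icc 1 Δ,
      pt i 0 ∈ S → pt j 0 ∈ S →
      β ≤ sinr α N S P (pt i (10 * Δ)) (pt i 0) →
      β ≤ sinr α N S P (pt j (10 * Δ)) (pt j 0) →
      i = j := by
  intro i hi j hj hiS hjS hsi hsj
  by_contra hne
  have h1 := key Δ α β N hN hβ P hP S hS i j hj hΔ hne hjS hsi
  have h2 := key Δ α β N hN hβ P hP S hS j i hi hΔ (Ne.symm hne) hiS hsj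
  rw [show ((i:ℝ)-j)^2 = ((j:ℝ)-i)^2 by ring] at h2
  set D := Real.sqrt (((j:ℝ)-i)^2 + (10*(Δ:ℝ))^2) with hD
  have hT : (0:ℝ) < 10 * Δ := by positivity
  have hDpos : 0 < D := Real.sqrt_pos.mpr (by positivity)
  obtain ⟨hi1, hi2⟩ := Finset.mem_Icc.mp hi
  obtain ⟨hj1, hj2⟩ := Finset.mem_Icc.mp hj
  have hi1' : (1:ℝ) ≤ i := by exact_mod_cast hi1
  have hi2' : (i:ℝ) ≤ Δ := by exact_mod_cast hi2
  have hj1' : (1:ℝ) ≤ j := by exact_mod_cast hj1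
  have hj2' : (j:ℝ) ≤ Δ := by exact_mod_cast hj2
  have hDsq : D^2 = ((j:ℝ)-i)^2 + (10*(Δ:ℝ))^2 := Real.sq_sqrt (by positivity)
  have hD2 : (100/101) * D^2 < (10*(Δ:ℝ))^2 := by
    have hlt : ((j:ℝ)-i)^2 < (Δ:ℝ)^2 := by nlinarith
    nlinarith
  have hgap := gap (10*(Δ:ℝ)) D α β hα hT hD2 hDpos hβ
  have hPi := hP i hi
  have hPj := hP j hj
  have hx : (0:ℝ) < D ^ (-α) := Real.rpow_pos_of_pos hDpos _
  have hy : (0:ℝ) < (10*(Δ:ℝ)) ^ (-α) := Real.rpow_pos_of_pos hT _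
  have hβpos : 0 < β := lt_of_lt_of_le (by positivity) hβ
  nlinarith [mul_le_mul h1 h2 (by positivity) (by positivity),
    mul_pos hPi hPj, mul_pos hx hx, sq_nonneg (β * D ^ (-α) - (10*(Δ:ℝ)) ^ (-α)),
    mul_pos (mul_pos hPi hPj) (mul_pos hx hx)]
end

section
/- Let α > 2, d > 0, let S be a finite set of points in the Euclidean plane whose pairwise distances are all at least d, let u be any point, and let k ≥ 1 be an integer. Then Σ_{s ∈ S, dist(s,u) ≥ k·d} dist(s,u)^(−α) ≤ 24·(1 + 1/(α − 2))·k^(2−α)·d^(−α). -/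
/-
Group the points by the shell `m = ⌊dist(s, u) / d⌋₊ ≥ k`. The disjoint balls of radius `d/2`
around the points of one shell, together with the ball of radius `md - d/2` around `u`, fit in
the ball of radius `(m+1)d + d/2`; comparing areas, a shell holds at most `16m + 8 ≤ 24m` points,
each contributing at most `(md)^(-α)`. The resulting series `∑_{m ≥ k} 24 m^(1-α)` is bounded by
its first term plus `∫_k^∞ x^(1-α) dx = k^(2-α)/(α-2)`.
-/

open Finset Metric MeasureTheory Module

theorem sum_Ico_rpow_le {α : ℝ} (hα : 2 < α) {k : ℕ} (hk : 1 ≤ k) (M : ℕ) :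
    ∑ m ∈ Ico k M, (m : ℝ) ^ (1 - α) ≤ (1 + 1 / (α - 2)) * (k : ℝ) ^ (2 - α) := by
  have hk₀ : (0 : ℝ) < k := by exact_mod_cast hk
  have hα₂ : 0 < α - 2 := by linarith
  rcases le_or_gt M k with hM | hM
  · rw [Ico_eq_empty_of_le hM, sum_empty]
    positivity
  set f : ℝ → ℝ := fun x => x ^ (1 - α)
  have split : ∑ m ∈ Ico k M, f m ≤ f k + ∑ m ∈ Ico k M, f ↑(m + 1) := by
    rw [sum_eq_sum_Ico_succ_bot hM, sum_Ico_add' (fun m : ℕ => f m)]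
    exact add_le_add le_rfl (sum_le_sum_of_subset_of_nonneg (Ico_subset_Ico_right M.le_succ)
      fun m _ _ => by positivity)
  have first_term : f k ≤ (k : ℝ) ^ (2 - α) :=
    Real.rpow_le_rpow_of_exponent_le (by exact_mod_cast hk) (by linarith)
  have tail : ∑ m ∈ Ico k M, f ↑(m + 1) ≤ (k : ℝ) ^ (2 - α) / (α - 2) :=
    calc ∑ m ∈ Ico k M, f ↑(m + 1) ≤ ∫ x in (k : ℝ)..M, f x :=
          AntitoneOn.sum_le_integral_Ico hM.le
            ((Real.antitoneOn_rpow_Ioi_of_exponent_nonpos (by linarith)).mono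
              fun x hx => hk₀.trans_le (by exact_mod_cast hx.1))
      _ = ((k : ℝ) ^ (2 - α) - (M : ℝ) ^ (2 - α)) / (α - 2) := by
          rw [integral_rpow]
          · rw [show 1 - α + 1 = 2 - α by ring, ← neg_sub α 2, div_neg, neg_div', neg_sub]
          · refine Or.inr ⟨by linarith, fun h0 => ?_⟩
            rw [Set.uIcc_of_le (by exact_mod_cast hM.le)] at h0
            exact hk₀.not_ge h0.1
      _ ≤ (k : ℝ) ^ (2 - α) / (α - 2) := by
          gcongr
          exact sub_le_self _ (by positivity)
  calc ∑ m ∈ Ico k M, f m ≤ (k : ℝ) ^ (2 - α) + (k : ℝ) ^ (2 - α) / (α - 2) := by linarith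
    _ = _ := by ring

theorem sum_measure_ball_add_measure_ball_le {X : Type*} [PseudoMetricSpace X]
    [MeasurableSpace X] [OpensMeasurableSpace X] (μ : Measure X) {T : Finset X} {d r₁ r₂ : ℝ}
    {u : X} (hd : 0 ≤ d) (hr : r₁ ≤ r₂) (hT : (T : Set X).Pairwise fun a b => d ≤ dist a b)
    (hmem : ∀ t ∈ T, dist t u ∈ Set.Icc r₁ r₂) :
    ∑ t ∈ T, μ (ball t (d / 2)) + μ (ball u (r₁ - d / 2)) ≤ μ (closedBall u (r₂ + d / 2)) := by
  have small_disjoint : (T : Set X).PairwiseDisjoint fun t => ball t (d / 2) :=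
    fun a ha b hb hab => ball_disjoint_ball (by linarith [hT ha hb hab])
  have inner_disjoint : Disjoint (⋃ t ∈ T, ball t (d / 2)) (ball u (r₁ - d / 2)) :=
    Set.disjoint_iUnion₂_left.2 fun t ht =>
      ball_disjoint_ball (by linarith [(hmem t ht).1])
  have subset : (⋃ t ∈ T, ball t (d / 2)) ∪ ball u (r₁ - d / 2) ⊆ closedBall u (r₂ + d / 2) := by
    refine Set.union_subset (Set.iUnion₂_subset fun t ht => ?_) ?_
    · exact (ball_subset_ball' (by linarith [(hmem t ht).2])).trans ball_subset_closedBall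
    · exact ball_subset_closedBall.trans (closedBall_subset_closedBall (by linarith))
  calc ∑ t ∈ T, μ (ball t (d / 2)) + μ (ball u (r₁ - d / 2))
      = μ ((⋃ t ∈ T, ball t (d / 2)) ∪ ball u (r₁ - d / 2)) := by
        rw [measure_union inner_disjoint measurableSet_ball,
          measure_biUnion_finset small_disjoint fun t _ => measurableSet_ball]
    _ ≤ μ (closedBall u (r₂ + d / 2)) := measure_mono subset

theorem card_mul_pow_le_of_pairwise_le_dist {E : Type*} [NormedAddCommGroup E] [NormedSpace ℝ E]
    [Nontrivial E] [FiniteDimensional ℝ E] {T : Finset E} {d r₁ r₂ : ℝ} {u : E}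
    (hd : 0 ≤ d) (hr₁ : d / 2 ≤ r₁) (hr : r₁ ≤ r₂)
    (hT : (T : Set E).Pairwise fun a b => d ≤ dist a b)
    (hmem : ∀ t ∈ T, dist t u ∈ Set.Icc r₁ r₂) :
    (#T : ℝ) * (d / 2) ^ finrank ℝ E ≤ (r₂ + d / 2) ^ finrank ℝ E - (r₁ - d / 2) ^ finrank ℝ E := by
  borelize E
  set μ : Measure E := Measure.addHaar
  have h := sum_measure_ball_add_measure_ball_le μ hd hr hT hmem
  rw [Measure.addHaar_closedBall μ _ (by linarith), Measure.addHaar_ball μ _ (by linarith)] at h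
  simp only [Measure.addHaar_ball μ _ (by linarith : 0 ≤ d / 2), sum_const, nsmul_eq_mul] at h
  rw [← mul_assoc, ← add_mul, ENNReal.mul_le_mul_iff_left (measure_ball_pos μ 0 one_pos).ne'
    measure_ball_lt_top.ne, ← ENNReal.ofReal_natCast, ← ENNReal.ofReal_mul (by positivity),
    ← ENNReal.ofReal_add (by positivity) (by positivity),
    ENNReal.ofReal_le_ofReal_iff (pow_nonneg (by linarith) _)] at h
  linarith

theorem card_le_of_mem_annulus {T : Finset (EuclideanSpace ℝ (Fin 2))} {d m : ℝ}
    {u : EuclideanSpace ℝ (Fin 2)} (hd : 0 < d) (hm : 1 / 2 ≤ m)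
    (hT : (T : Set (EuclideanSpace ℝ (Fin 2))).Pairwise fun a b => d ≤ dist a b)
    (hmem : ∀ t ∈ T, dist t u ∈ Set.Icc (m * d) ((m + 1) * d)) :
    (#T : ℝ) ≤ 16 * m + 8 := by
  have h := card_mul_pow_le_of_pairwise_le_dist hd.le (by nlinarith) (by nlinarith) hT hmem
  rw [finrank_euclideanSpace_fin,
    show ((m + 1) * d + d / 2) ^ 2 - (m * d - d / 2) ^ 2 = (16 * m + 8) * (d / 2) ^ 2 by ring] at h
  exact le_of_mul_le_mul_right h (by positivity)

theorem sum_dist_rpow_neg_le_of_mem_annulus {T : Finset (EuclideanSpace ℝ (Fin 2))} {α d m : ℝ}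
    {u : EuclideanSpace ℝ (Fin 2)} (hα : 0 ≤ α) (hd : 0 < d) (hm : 1 ≤ m)
    (hT : (T : Set (EuclideanSpace ℝ (Fin 2))).Pairwise fun a b => d ≤ dist a b)
    (hmem : ∀ t ∈ T, dist t u ∈ Set.Icc (m * d) ((m + 1) * d)) :
    ∑ t ∈ T, dist t u ^ (-α) ≤ 24 * m ^ (1 - α) * d ^ (-α) := by
  have hm₀ : 0 < m := by linarith
  calc ∑ t ∈ T, dist t u ^ (-α) ≤ ∑ _t ∈ T, (m * d) ^ (-α) :=
        sum_le_sum fun t ht =>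
          Real.rpow_le_rpow_of_nonpos (by positivity) (hmem t ht).1 (by linarith)
    _ = #T * (m * d) ^ (-α) := by rw [sum_const, nsmul_eq_mul]
    _ ≤ 24 * m * (m * d) ^ (-α) := by
        gcongr
        linarith [card_le_of_mem_annulus hd (by linarith) hT hmem]
    _ = 24 * m ^ (1 - α) * d ^ (-α) := by
        rw [sub_eq_add_neg, Real.rpow_add hm₀, Real.rpow_one, Real.mul_rpow hm₀.le hd.le]
        ring

/-- Interference tail bound: for path-loss exponent `α > 2` and a finite set `S` of points
in the Euclidean plane with pairwise distances at least `d > 0`, the sum of `dist(s,u)^(-α)`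
over the points of `S` at distance at least `k·d` from `u` is at most
`24·(1 + 1/(α-2))·k^(2-α)·d^(-α)`. -/
theorem stmt_8 (α d : ℝ) (hα : 2 < α) (hd : 0 < d)
    (S : Finset (EuclideanSpace ℝ (Fin 2)))
    (hS : (S : Set (EuclideanSpace ℝ (Fin 2))).Pairwise fun a b => d ≤ dist a b)
    (u : EuclideanSpace ℝ (Fin 2)) (k : ℕ) (hk : 1 ≤ k) :
    ∑ s ∈ S.filter fun s => (k : ℝ) * d ≤ dist s u, dist s u ^ (-α) ≤
      24 * (1 + 1 / (α - 2)) * (k : ℝ) ^ (2 - α) * d ^ (-α) := by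
  set S' := S.filter fun s => (k : ℝ) * d ≤ dist s u
  set shell : EuclideanSpace ℝ (Fin 2) → ℕ := fun s => ⌊dist s u / d⌋₊
  have maps_to : ∀ s ∈ S', shell s ∈ Ico k (S'.sup shell + 1) := fun s hs =>
    mem_Ico.2 ⟨Nat.le_floor ((le_div_iff₀ hd).2 (mem_filter.1 hs).2),
      Nat.lt_succ_of_le (le_sup hs)⟩
  have mem_shell : ∀ m : ℕ, ∀ s ∈ S'.filter (shell · = m),
      dist s u ∈ Set.Icc (m * d) ((m + 1) * d) := by
    intro m s hs
    obtain ⟨hlo, hhi⟩ := (Nat.floor_eq_iff (by positivity)).1 (mem_filter.1 hs).2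
    exact ⟨(le_div_iff₀ hd).1 hlo, ((div_lt_iff₀ hd).1 hhi).le⟩
  rw [← sum_fiberwise_of_maps_to maps_to]
  calc ∑ m ∈ Ico k (S'.sup shell + 1), ∑ s ∈ S'.filter (shell · = m), dist s u ^ (-α)
      ≤ ∑ m ∈ Ico k (S'.sup shell + 1), 24 * (m : ℝ) ^ (1 - α) * d ^ (-α) :=
        sum_le_sum fun m hm => sum_dist_rpow_neg_le_of_mem_annulus (by linarith) hd
          (by exact_mod_cast hk.trans (mem_Ico.1 hm).1)
          (hS.mono fun s hs => (mem_filter.1 (mem_filter.1 hs).1).1) (mem_shell m)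
    _ = 24 * d ^ (-α) * ∑ m ∈ Ico k (S'.sup shell + 1), (m : ℝ) ^ (1 - α) := by
        rw [mul_sum]
        exact sum_congr rfl fun m _ => by ring
    _ ≤ 24 * d ^ (-α) * ((1 + 1 / (α - 2)) * (k : ℝ) ^ (2 - α)) := by
        gcongr
        exact sum_Ico_rpow_le hα hk _
    _ = 24 * (1 + 1 / (α - 2)) * (k : ℝ) ^ (2 - α) * d ^ (-α) := by ring
end

section
/- Let α > 2, d > 0, K ≥ 0, let u be a point in the Euclidean plane, and let S be a finite set of points with dist(s, u) ≥ d for all s ∈ S such that for every integer m ≥ 1, the number of points s ∈ S with m·d ≤ dist(s, u) < (m+1)·d is at most K·m. Then Σ_{s ∈ S} dist(s, u)^(−α) ≤ K·(1 + 1/(α − 2))·d^(−α). -/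
open scoped BigOperators

private lemma step_ineq (α : ℝ) (hα : 2 < α) (a : ℝ) (ha : 1 ≤ a) :
    (a + 1) ^ (1 - α) ≤ (a ^ (2 - α) - (a + 1) ^ (2 - α)) / (α - 2) := by
  have ha0 : 0 < a := lt_of_lt_of_le one_pos ha
  have hb0 : 0 < a + 1 := by linarith
  have hnotmem : (0 : ℝ) ∉ Set.uIcc a (a + 1) := by
    rw [Set.mem_uIcc]; push_neg
    constructor <;> intro h <;> linarith
  have hint : ∫ x in a..(a + 1), x ^ (1 - α)
      = ((a + 1) ^ (2 - α) - a ^ (2 - α)) / (2 - α) := by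
    rw [integral_rpow (Or.inr ⟨by intro h; linarith [h], hnotmem⟩)]
    have h12 : (1:ℝ) - α + 1 = 2 - α := by ring
    rw [h12]
  have hmono : ∫ x in a..(a + 1), (a + 1) ^ (1 - α) ≤ ∫ x in a..(a + 1), x ^ (1 - α) := by
    apply intervalIntegral.integral_mono_on (by linarith)
      intervalIntegrable_const (intervalIntegral.intervalIntegrable_rpow (Or.inr hnotmem))
    intro x hx
    exact Real.rpow_le_rpow_of_nonpos (lt_of_lt_of_le ha0 hx.1) hx.2 (by linarith)
  rw [intervalIntegral.integral_const, smul_eq_mul] at hmono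
  have h1 : (a + 1 - a) * (a + 1) ^ (1 - α) = (a + 1) ^ (1 - α) := by ring
  rw [h1, hint] at hmono
  have h2 : ((a + 1) ^ (2 - α) - a ^ (2 - α)) / (2 - α)
      = (a ^ (2 - α) - (a + 1) ^ (2 - α)) / (α - 2) := by
    rw [div_eq_div_iff (by linarith) (by linarith)]; ring
  linarith [h2 ▸ hmono]

private lemma sum_zeta (α : ℝ) (hα : 2 < α) :
    ∀ M : ℕ, ∑ m ∈ Finset.Icc 1 M, (m : ℝ) ^ (1 - α)
      ≤ 1 + 1 / (α - 2) - (M : ℝ) ^ (2 - α) / (α - 2) := by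
  have hα2 : (0 : ℝ) < α - 2 := by linarith
  intro M
  induction M with
  | zero =>
    simp [Real.zero_rpow (by intro h; linarith [h] : (2 : ℝ) - α ≠ 0)]
    positivity
  | succ n ih =>
    rcases Nat.eq_zero_or_pos n with hn | hn
    · subst hn
      simp [Real.one_rpow]
    · rw [Finset.sum_Icc_succ_top (by omega)]
      have hstep := step_ineq α hα n (by exact_mod_cast hn)
      rw [sub_div] at hstep
      push_cast
      push_cast at ih hstep
      linarith

/-- If every point of the finite set `S` is at distance at least `d > 0` from `u` and each
annulus `m·d ≤ dist(s,u) < (m+1)·d` (for integers `m ≥ 1`) contains at most `K·m` points of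
`S`, then `Σ_{s ∈ S} dist(s,u)^(-α) ≤ K·(1 + 1/(α-2))·d^(-α)` for any path-loss exponent
`α > 2`. -/
theorem stmt_9 (α d K : ℝ) (hα : 2 < α) (hd : 0 < d) (hK : 0 ≤ K)
    (u : EuclideanSpace ℝ (Fin 2)) (S : Finset (EuclideanSpace ℝ (Fin 2)))
    (hdist : ∀ s ∈ S, d ≤ dist s u)
    (hcount : ∀ m : ℕ, 1 ≤ m →
      (((S.filter fun s => (m : ℝ) * d ≤ dist s u ∧ dist s u < ((m : ℝ) + 1) * d).card : ℝ)
        ≤ K * m)) :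
    ∑ s ∈ S, dist s u ^ (-α) ≤ K * (1 + 1 / (α - 2)) * d ^ (-α) := by
  classical
  set g : EuclideanSpace ℝ (Fin 2) → ℕ := fun s => ⌊dist s u / d⌋₊ with hg
  set M : ℕ := S.sup g with hM
  -- annulus membership iff fiber of g
  have hfiber : ∀ m : ℕ, 1 ≤ m → ∀ s ∈ S,
      (g s = m ↔ ((m : ℝ) * d ≤ dist s u ∧ dist s u < ((m : ℝ) + 1) * d)) := by
    intro m hm s hs
    have hq : 0 ≤ dist s u / d := div_nonneg dist_nonneg hd.le
    rw [hg]
    simp only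
    rw [Nat.floor_eq_iff hq, le_div_iff₀ hd, div_lt_iff₀ hd]
  have hginS : ∀ s ∈ S, 1 ≤ g s ∧ g s ≤ M := by
    intro s hs
    refine ⟨?_, Finset.le_sup hs⟩
    have : (1 : ℝ) ≤ dist s u / d := (one_le_div hd).mpr (hdist s hs)
    exact Nat.le_floor (by exact_mod_cast this)
  -- decompose
  have hcover : S = (Finset.Icc 1 M).biUnion (fun m => S.filter fun s => g s = m) := by
    ext s
    simp only [Finset.mem_biUnion, Finset.mem_filter, Finset.mem_Icc]
    constructor
    · intro hs; exact ⟨g s, ⟨(hginS s hs).1, (hginS s hs).2⟩, hs, rfl⟩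
    · rintro ⟨m, _, hs, _⟩; exact hs
  have hdisj : ∀ m1 ∈ Finset.Icc 1 M, ∀ m2 ∈ Finset.Icc 1 M, m1 ≠ m2 →
      Disjoint (S.filter fun s => g s = m1) (S.filter fun s => g s = m2) := by
    intro m1 _ m2 _ hne
    apply Finset.disjoint_filter_filter'
    exact Set.disjoint_left.mpr (by rintro s h1 h2; exact hne (h1.symm.trans h2))
  have hsum : ∑ s ∈ S, dist s u ^ (-α)
      = ∑ m ∈ Finset.Icc 1 M, ∑ s ∈ S.filter (fun s => g s = m), dist s u ^ (-α) := by
    conv_lhs => rw [hcover]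
    exact Finset.sum_biUnion hdisj
  rw [hsum]
  -- bound each annulus
  have hbound : ∀ m ∈ Finset.Icc 1 M,
      ∑ s ∈ S.filter (fun s => g s = m), dist s u ^ (-α)
        ≤ K * d ^ (-α) * (m : ℝ) ^ (1 - α) := by
    intro m hm
    obtain ⟨hm1, _⟩ := Finset.mem_Icc.mp hm
    have hm0 : (0 : ℝ) < m := by exact_mod_cast hm1
    have hmd : (0 : ℝ) < (m : ℝ) * d := mul_pos hm0 hd
    have hfilter_eq : S.filter (fun s => g s = m)
        = S.filter (fun s => (m : ℝ) * d ≤ dist s u ∧ dist s u < ((m : ℝ) + 1) * d) := by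
      apply Finset.filter_congr
      intro s hs
      simpa using hfiber m hm1 s hs
    have hterm : ∀ s ∈ S.filter (fun s => g s = m),
        dist s u ^ (-α) ≤ ((m : ℝ) * d) ^ (-α) := by
      intro s hs
      rw [Finset.mem_filter] at hs
      have := ((hfiber m hm1 s hs.1).mp hs.2).1
      exact Real.rpow_le_rpow_of_nonpos hmd this (by linarith)
    calc ∑ s ∈ S.filter (fun s => g s = m), dist s u ^ (-α)
        ≤ ∑ _s ∈ S.filter (fun s => g s = m), ((m : ℝ) * d) ^ (-α) :=
          Finset.sum_le_sum hterm
      _ = ((S.filter (fun s => g s = m)).card : ℝ) * ((m : ℝ) * d) ^ (-α) := by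
          rw [Finset.sum_const, nsmul_eq_mul]
      _ ≤ (K * m) * ((m : ℝ) * d) ^ (-α) := by
          apply mul_le_mul_of_nonneg_right _ (Real.rpow_nonneg hmd.le _)
          rw [hfilter_eq]
          exact hcount m hm1
      _ = K * d ^ (-α) * (m : ℝ) ^ (1 - α) := by
          rw [Real.mul_rpow hm0.le hd.le]
          have : (m : ℝ) * (m : ℝ) ^ (-α) = (m : ℝ) ^ (1 - α) := by
            rw [sub_eq_add_neg, Real.rpow_add hm0, Real.rpow_one]
          ring_nf
          rw [← this]
          ring
  calc ∑ m ∈ Finset.Icc 1 M, ∑ s ∈ S.filter (fun s => g s = m), dist s u ^ (-α)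
      ≤ ∑ m ∈ Finset.Icc 1 M, K * d ^ (-α) * (m : ℝ) ^ (1 - α) :=
        Finset.sum_le_sum hbound
    _ = K * d ^ (-α) * ∑ m ∈ Finset.Icc 1 M, (m : ℝ) ^ (1 - α) := by
        rw [Finset.mul_sum]
    _ ≤ K * d ^ (-α) * (1 + 1 / (α - 2)) := by
        apply mul_le_mul_of_nonneg_left _ (mul_nonneg hK (Real.rpow_nonneg hd.le _))
        have h := sum_zeta α hα M
        have hMnn : 0 ≤ (M : ℝ) ^ (2 - α) / (α - 2) :=
          div_nonneg (Real.rpow_nonneg (Nat.cast_nonneg M) _) (by linarith)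
        linarith
    _ = K * (1 + 1 / (α - 2)) * d ^ (-α) := by ring
end

section
/- Let α ≥ 2, β ≥ 1, P > 0, R₁ > 0, and 0 < φ ≤ 1/6; set N := P/(β·R₁^α) and R_φ := φ·R₁. Let x be a transmitting node in the Euclidean plane and let Z be a finite set of other transmitting nodes, all distinct from x, such that the total received power at x satisfies Σ_{z ∈ Z} P·dist(z,x)^(−α) ≤ P/(4(β+4)·R_φ)^α. Then for every point y with 0 < dist(x,y) ≤ 2·R_φ, the SINR of x at y satisfies (P·dist(x,y)^(−α)) / (Σ_{z ∈ Z} P·dist(z,y)^(−α) + N) ≥ β; that is, y successfully receives x's message. -/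
/-!
Low interference at `x` forces every other transmitter to lie at distance at least
`K = 4(β+4)R_φ` from `x`, since a single term of the sum already exceeds the bound otherwise.
A receiver `y` with `dist x y ≤ r = 2R_φ ≤ K/2` is then at least half as far from each
transmitter, so the interference at `y` is at most `2^α` times that at `x`, i.e. at most
`(β+4)^(-α) ≤ 1/(16β)` times the signal floor `P/r^α`. As `R₁ ≥ 3r`, `β` times the noise is
at most `3^(-α) ≤ 1/9` of it, and `1/16 + 1/9 < 1`.
-/

section PathLoss

variable {E : Type*} [MetricSpace E] {P α : ℝ} {x y : E} {Z : Finset E}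

theorem le_dist_of_sum_rpow_neg_le {K : ℝ} (hP : 0 < P) (hα : 0 < α) (hK : 0 < K)
    (hZx : ∀ z ∈ Z, z ≠ x) (hI : ∑ z ∈ Z, P * dist z x ^ (-α) ≤ P / K ^ α) :
    ∀ z ∈ Z, K ≤ dist z x := by
  intro z hz
  have hterm : P * dist z x ^ (-α) ≤ P * K ^ (-α) := by
    rw [Real.rpow_neg hK.le, ← div_eq_mul_inv]
    exact (Finset.single_le_sum (f := fun w => P * dist w x ^ (-α))
      (fun w _ => by positivity) hz).trans hI
  exact (Real.rpow_le_rpow_iff_of_neg (dist_pos.2 (hZx z hz)) hK (neg_neg_of_pos hα)).1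
    (le_of_mul_le_mul_left hterm hP)

theorem div_two_rpow_neg {d : ℝ} (hd : 0 ≤ d) : (d / 2) ^ (-α) = 2 ^ α * d ^ (-α) := by
  rw [Real.div_rpow hd zero_le_two, Real.rpow_neg zero_le_two, div_inv_eq_mul, mul_comm]

theorem sum_rpow_neg_dist_le_two_rpow_mul (hP : 0 ≤ P) (hα : 0 ≤ α)
    (hZx : ∀ z ∈ Z, z ≠ x) (hfar : ∀ z ∈ Z, 2 * dist x y ≤ dist z x) :
    ∑ z ∈ Z, P * dist z y ^ (-α) ≤ 2 ^ α * ∑ z ∈ Z, P * dist z x ^ (-α) := by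
  rw [Finset.mul_sum]
  refine Finset.sum_le_sum fun z hz => ?_
  have hhalf : 0 < dist z x / 2 := half_pos (dist_pos.2 (hZx z hz))
  have hzy : dist z x / 2 ≤ dist z y := by
    linarith [dist_triangle z y x, dist_comm x y, hfar z hz]
  calc P * dist z y ^ (-α) ≤ P * (dist z x / 2) ^ (-α) :=
        mul_le_mul_of_nonneg_left (Real.rpow_le_rpow_of_nonpos hhalf hzy (neg_nonpos.2 hα)) hP
    _ = 2 ^ α * (P * dist z x ^ (-α)) := by rw [div_two_rpow_neg dist_nonneg]; ring

theorem sum_rpow_neg_dist_le_of_sum_rpow_neg_le {c r : ℝ} (hP : 0 < P) (hα : 0 < α)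
    (hc : 1 ≤ c) (hr : 0 < r) (hZx : ∀ z ∈ Z, z ≠ x) (hxy : dist x y ≤ r)
    (hI : ∑ z ∈ Z, P * dist z x ^ (-α) ≤ P / (2 * c * r) ^ α) :
    ∑ z ∈ Z, P * dist z y ^ (-α) ≤ P / r ^ α / c ^ α := by
  have hfar : ∀ z ∈ Z, 2 * dist x y ≤ dist z x := fun z hz =>
    (by nlinarith : 2 * dist x y ≤ 2 * c * r).trans
      (le_dist_of_sum_rpow_neg_le hP hα (by positivity) hZx hI z hz)
  calc ∑ z ∈ Z, P * dist z y ^ (-α) ≤ 2 ^ α * ∑ z ∈ Z, P * dist z x ^ (-α) :=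
        sum_rpow_neg_dist_le_two_rpow_mul hP.le hα.le hZx hfar
    _ ≤ 2 ^ α * (P / (2 * c * r) ^ α) := by gcongr
    _ = P / r ^ α / c ^ α := by
        rw [Real.mul_rpow (by positivity) hr.le, Real.mul_rpow zero_le_two (by positivity)]
        field_simp

end PathLoss

theorem sq_le_rpow_of_two_le {b α : ℝ} (hb : 1 ≤ b) (hα : 2 ≤ α) : b ^ 2 ≤ b ^ α := by
  simpa [Real.rpow_two] using Real.rpow_le_rpow_of_exponent_le hb hα

theorem sixteen_mul_le_add_four_rpow {β α : ℝ} (hβ : 0 ≤ β) (hα : 2 ≤ α) :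
    16 * β ≤ (β + 4) ^ α :=
  (by nlinarith [sq_nonneg (β - 4)] : 16 * β ≤ (β + 4) ^ 2).trans
    (sq_le_rpow_of_two_le (by linarith) hα)

theorem div_rpow_le_mul_rpow_neg {P α d r : ℝ} (hP : 0 ≤ P) (hα : 0 ≤ α) (hd : 0 < d)
    (hdr : d ≤ r) : P / r ^ α ≤ P * d ^ (-α) := by
  rw [div_eq_mul_inv, ← Real.rpow_neg (hd.trans_le hdr).le]
  exact mul_le_mul_of_nonneg_left (Real.rpow_le_rpow_of_nonpos hd hdr (neg_nonpos.2 hα)) hP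

theorem stmt_11_general (α β P R₁ φ : ℝ) (hα : 2 ≤ α) (hβ : 1 ≤ β) (hP : 0 < P)
    (hR₁ : 0 < R₁) (hφ : φ ≤ 1 / 6)
    (x : EuclideanSpace ℝ (Fin 2)) (Z : Finset (EuclideanSpace ℝ (Fin 2)))
    (hZx : ∀ z ∈ Z, z ≠ x)
    (hI : ∑ z ∈ Z, P * dist z x ^ (-α) ≤ P / (4 * (β + 4) * (φ * R₁)) ^ α)
    (y : EuclideanSpace ℝ (Fin 2)) (hy0 : 0 < dist x y) (hy : dist x y ≤ 2 * (φ * R₁)) :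
    β ≤ (P * dist x y ^ (-α)) /
        ((∑ z ∈ Z, P * dist z y ^ (-α)) + P / (β * R₁ ^ α)) := by
  set r := 2 * (φ * R₁) with hr_def
  have hr : 0 < r := hy0.trans_le hy
  set u := P / r ^ α with hu_def
  have hu : 0 < u := div_pos hP (Real.rpow_pos_of_pos hr α)
  have hsignal : u ≤ P * dist x y ^ (-α) := div_rpow_le_mul_rpow_neg hP.le (by linarith) hy0 hy
  have hinterference : ∑ z ∈ Z, P * dist z y ^ (-α) ≤ u / (β + 4) ^ α :=
    sum_rpow_neg_dist_le_of_sum_rpow_neg_le hP (by linarith) (by linarith) hr hZx hy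
      (by rwa [show 2 * (β + 4) * r = 4 * (β + 4) * (φ * R₁) by rw [hr_def]; ring])
  have hnoise : P / R₁ ^ α ≤ u / 3 ^ α := by
    rw [hu_def, div_div, ← Real.mul_rpow hr.le zero_le_three]
    exact div_le_div_of_nonneg_left hP.le (by positivity) (by gcongr; rw [hr_def]; nlinarith)
  have h16 : 16 * β ≤ (β + 4) ^ α := sixteen_mul_le_add_four_rpow (by linarith) hα
  have h9 : 9 ≤ (3 : ℝ) ^ α :=
    (sq_le_rpow_of_two_le (by norm_num) hα).trans_eq' (by norm_num)
  have hD : 0 < ∑ z ∈ Z, P * dist z y ^ (-α) + P / (β * R₁ ^ α) :=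
    add_pos_of_nonneg_of_pos (Finset.sum_nonneg fun z _ => by positivity) (by positivity)
  rw [le_div_iff₀ hD, mul_add, mul_div_assoc', mul_div_mul_left _ _ (by positivity)]
  calc β * ∑ z ∈ Z, P * dist z y ^ (-α) + P / R₁ ^ α
      ≤ β * (u / (β + 4) ^ α) + u / 3 ^ α := by gcongr
    _ ≤ u / 16 + u / 9 := by
        gcongr ?_ + ?_
        · rw [mul_div_assoc', div_le_div_iff₀ (by positivity) (by norm_num)]
          nlinarith
        · exact div_le_div_of_nonneg_left hu.le (by norm_num) h9
    _ ≤ P * dist x y ^ (-α) := by linarith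

/-- Low interference at the sender implies successful local broadcast: with uniform power
`P`, noise `N = P/(β·R₁^α)`, broadcasting radius `R_φ = φ·R₁` for `0 < φ ≤ 1/6`, if the
total received power at the sender `x` from the other transmitters `Z` is at most
`P/(4(β+4)·R_φ)^α`, then every point `y` with `0 < dist(x,y) ≤ 2·R_φ` receives `x`'s
message, i.e. the SINR of `x` at `y` is at least `β`. -/
theorem stmt_11 (α β P R₁ φ : ℝ) (hα : 2 ≤ α) (hβ : 1 ≤ β) (hP : 0 < P)
    (hR₁ : 0 < R₁) (hφ0 : 0 < φ) (hφ : φ ≤ 1 / 6)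
    (x : EuclideanSpace ℝ (Fin 2)) (Z : Finset (EuclideanSpace ℝ (Fin 2)))
    (hZx : ∀ z ∈ Z, z ≠ x)
    (hI : ∑ z ∈ Z, P * dist z x ^ (-α) ≤ P / (4 * (β + 4) * (φ * R₁)) ^ α)
    (y : EuclideanSpace ℝ (Fin 2)) (hy0 : 0 < dist x y) (hy : dist x y ≤ 2 * (φ * R₁)) :
    β ≤ (P * dist x y ^ (-α)) /
        ((∑ z ∈ Z, P * dist z y ^ (-α)) + P / (β * R₁ ^ α)) :=
  stmt_11_general α β P R₁ φ hα hβ hP hR₁ hφ x Z hZx hI y hy0 hy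
end

section
/- Let (X, dist) be a metric space, α ≥ 0, let v ∈ X, let S be a finite subset of X, and let u ∈ S satisfy dist(u, v) ≤ dist(w, v) for all w ∈ S (u is a closest point of S to v). Then for every subset S' ⊆ S with u ∉ S' and v ∉ S', Σ_{w ∈ S'} dist(w, u)^(−α) ≥ 2^(−α) · Σ_{w ∈ S'} dist(w, v)^(−α). -/
open scoped BigOperators

/-- Interference comparison at a closest sender: if `u ∈ S` is a closest point of `S` to
`v`, then for every subset `S' ⊆ S` avoiding `u` and `v`, the interference received at `u`
is at least a `2^(-α)` fraction of the interference received at `v`. -/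
theorem stmt_12 {X : Type*} [MetricSpace X] (α : ℝ) (hα : 0 ≤ α)
    (v : X) (S : Finset X) (u : X) (huS : u ∈ S)
    (hclosest : ∀ w ∈ S, dist u v ≤ dist w v)
    (S' : Finset X) (hS' : S' ⊆ S) (huS' : u ∉ S') (hvS' : v ∉ S') :
    (2 : ℝ) ^ (-α) * ∑ w ∈ S', dist w v ^ (-α) ≤ ∑ w ∈ S', dist w u ^ (-α) := by
  rw [Finset.mul_sum]
  apply Finset.sum_le_sum
  intro w hw
  have hwv : (0:ℝ) < dist w v := by
    rw [dist_pos]; rintro rfl; exact hvS' hw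
  have h2 : dist w u ≤ 2 * dist w v := by
    have := hclosest w (hS' hw)
    have := dist_triangle w v u
    rw [dist_comm v u] at this
    linarith
  calc (2:ℝ) ^ (-α) * dist w v ^ (-α)
      = (2 * dist w v) ^ (-α) := by
        rw [Real.mul_rpow (by norm_num) hwv.le]
    _ ≤ dist w u ^ (-α) :=
        Real.rpow_le_rpow_of_nonpos (dist_pos.2 (fun h => huS' (h ▸ hw))) h2 (neg_nonpos.2 hα)
end
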